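/- Let p be a prime and k, m, n, a, b, c, u positive integers with q = p^m, k | q−1, n = (q−1)/k, m = ab, n = bc, b > 1, u = (p^a−1)/c, such that c is a primitive divisor of p^a−1, n is a primitive divisor of p^m−1, and (p−1) | c. For a prime power Q, divisor j of Q−1 and α ∈ F_Q, write N_{j,α}(F_Q) = 1 + #{(x,y) ∈ F_Q × F_Q : y^p − y = α x^j}. Then for each β ∈ F_{p^m} there exist α_1, …, α_b ∈ F_{p^a} such that b·N_{k,β}(F_{p^m}) ≡ Ψ_b(p^a)·Σ_{i=1}^b N_{u,α_i}(F_{p^a}) (mod p^a) and b·N_{k,β}(F_{p^m}) ≡ p^{a(b−1)}·Σ_{i=1}^b N_{u,α_i}(F_{p^a}) (mod Ψ_{b−1}(p^a)). -/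

import Mathlib

open scoped BigOperators

/-- `Ψ_b(x) = x^(b-1) + ⋯ + x + 1`. -/
def psi (b x : ℕ) : ℕ := ∑ i ∈ Finset.range b, x ^ i

/-- `n` is a primitive divisor of `p^m - 1`. -/
def IsPrimitiveDivisor (n p m : ℕ) : Prop :=
  n ∣ p ^ m - 1 ∧ ∀ t : ℕ, 1 ≤ t → t < m → ¬ n ∣ p ^ t - 1

/-- `N_{j,α}(F) = 1 +` the number of affine points of the Artin–Schreier curve
`y^p - y = α x^j` over the finite field `F`. -/
def ascount (p : ℕ) (F : Type) [Field F] [Fintype F] [DecidableEq F] (j : ℕ) (α : F) : ℕ :=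
  1 + (Finset.univ.filter fun xy : F × F => xy.2 ^ p - xy.2 = α * xy.1 ^ j).card

/-!
Write `℘ y = y ^ p - y`: an additive map whose kernel is the prime field, so each of its fibres
has `p` points or none and `N_{j,α}(K) = 1 + p · #{x | α xʲ ∈ ℘ K}`. When `j e = |K| - 1`, the
map `x ↦ xʲ` is `j`-to-one from `Kˣ` onto the `e`-th roots of unity, whence
`N_{j,α}(K) = 1 + p (1 + j Z)` with `Z = #{w | wᵉ = 1, α w ∈ ℘ K}`.

For finite fields `F ⊆ E` one has `x ∈ ℘ E ↔ Tr_{E/F} x ∈ ℘ F`: the trace commutes with `℘`, so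
`℘ E ≤ Tr⁻¹ (℘ F)`, and both subgroups have index `p`. If `h ∈ Eˣ` has order `n = b c`, then
`μ_n(E)` is the disjoint union of the cosets `hⁱ μ_c(F)`, `i < b`, and `F`-linearity of the trace
turns the count `Z` over `E` into the sum of the counts over `F` for `α_i = Tr (β hⁱ)`.

Finally `b k = u Ψ_b(q)`, so both sides of each congruence reduce to `b (1 + p) + p u Z`, because
`Ψ_b(q) ≡ 1` modulo `q` and modulo `Ψ_{b-1}(q)`, and `q^{b-1} ≡ 1` modulo `Ψ_{b-1}(q)`.
-/

open Finset

namespace IsCyclic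

variable {G : Type*} [CommGroup G] [Fintype G] [IsCyclic G]

theorem card_filter_pow_eq_one [DecidableEq G] {m : ℕ} (hm : m ∣ Nat.card G) :
    #{w : G | w ^ m = 1} = m := by
  rw [← Fintype.card_subtype, ← Nat.card_eq_fintype_card]
  exact (card_powMonoidHom_ker G m).trans (Nat.gcd_eq_right hm)

theorem pow_eq_one_iff_mem_range_pow {d e : ℕ} (h : Nat.card G = d * e) {w : G} :
    w ^ e = 1 ↔ w ∈ Set.range (· ^ d) := by
  have hd : d ≠ 0 := by rintro rfl; simp at h
  suffices (powMonoidHom e : G →* G).ker = (powMonoidHom d).range from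
    SetLike.ext_iff.1 this w
  refine (Subgroup.eq_of_le_of_card_ge ?_ ?_).symm
  · rintro _ ⟨x, rfl⟩
    simp [← pow_mul, ← h]
  · rw [card_powMonoidHom_ker, card_powMonoidHom_range, h, Nat.gcd_mul_right_left,
      Nat.gcd_mul_left_left, Nat.mul_div_cancel_left _ (Nat.pos_of_ne_zero hd)]

theorem card_filter_pow [DecidableEq G] {d e : ℕ} (h : Nat.card G = d * e) (P : G → Prop)
    [DecidablePred P] : #{x : G | P (x ^ d)} = d * #{w : G | w ^ e = 1 ∧ P w} := by
  have hmaps : ∀ x ∈ ({x | P (x ^ d)} : Finset G),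
      x ^ d ∈ ({w | w ^ e = 1 ∧ P w} : Finset G) := by
    intro x hx
    simp only [mem_filter, mem_univ, true_and] at hx ⊢
    exact ⟨(pow_eq_one_iff_mem_range_pow h).2 ⟨x, rfl⟩, hx⟩
  rw [card_eq_sum_card_fiberwise hmaps, sum_const_nat, mul_comm]
  intro w hw
  simp only [mem_filter, mem_univ, true_and] at hw
  calc #{x ∈ {x | P (x ^ d)} | x ^ d = w} = #{x : G | x ^ d = w} := by
        rw [filter_filter]; congr 1; ext x; simp only [mem_filter, mem_univ, true_and]
        exact ⟨And.right, fun hx => ⟨hx ▸ hw.2, hx⟩⟩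
    _ = #{x : G | x ^ d = 1} := MonoidHom.card_fiber_eq_of_mem_range (powMonoidHom d : G →* G)
        ((pow_eq_one_iff_mem_range_pow h).1 hw.1) ⟨1, one_pow d⟩
    _ = d := card_filter_pow_eq_one (Dvd.intro e h.symm)

theorem card_filter_pow_eq_one_eq_sum [DecidableEq G] {H : Type*} [CommGroup H] [Fintype H]
    [IsCyclic H] [DecidableEq H] (φ : H →* G) (hφ : Function.Injective φ) {b c : ℕ}
    (hc : c ∣ Nat.card H) (hbc : b * c ∣ Nat.card G) {g : G} (hg : orderOf g = b * c)
    (P : G → Prop) [DecidablePred P] :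
    #{w : G | w ^ (b * c) = 1 ∧ P w} =
      ∑ i ∈ range b, #{t : H | t ^ c = 1 ∧ P (g ^ i * φ t)} := by
  have hc0 : c ≠ 0 := by rintro rfl; simp at hc
  set A := range b ×ˢ ({t : H | t ^ c = 1} : Finset H)
  set Φ : ℕ × H → G := fun it => g ^ it.1 * φ it.2
  have hΦ : Set.InjOn Φ A := by
    rintro ⟨i, t⟩ hit ⟨j, s⟩ hjs heq
    simp only [A, coe_product, Set.mem_prod, coe_range, Set.mem_Iio, coe_filter, mem_univ,
      true_and, Set.mem_ofPred_eq] at hit hjs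
    have hgc : g ^ (i * c) = g ^ (j * c) := by
      simpa [Φ, mul_pow, ← map_pow, hit.2, hjs.2, ← pow_mul] using congr_arg (· ^ c) heq
    rw [pow_eq_pow_iff_modEq, hg] at hgc
    have hij : i = j := Nat.ModEq.eq_of_lt_of_lt (Nat.ModEq.mul_right_cancel' hc0 hgc) hit.1 hjs.1
    subst hij
    simpa [Φ, hφ.eq_iff] using heq
  have himage : A.image Φ = ({w : G | w ^ (b * c) = 1} : Finset G) := by
    refine eq_of_subset_of_card_le ?_ ?_
    · intro w hw
      simp only [A, Φ, mem_image, mem_product, mem_range, mem_filter, mem_univ, true_and] at hw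
      obtain ⟨⟨i, t⟩, ⟨-, ht⟩, rfl⟩ := hw
      simp only [mem_filter, mem_univ, true_and]
      have hgbc : g ^ (b * c) = 1 := hg ▸ pow_orderOf_eq_one g
      rw [mul_pow, ← map_pow, ← pow_mul, mul_comm i, pow_mul, hgbc, mul_comm b c, pow_mul, ht,
        one_pow, one_pow, map_one, mul_one]
    · rw [card_image_of_injOn hΦ, card_product, card_range, card_filter_pow_eq_one hc,
        card_filter_pow_eq_one hbc]
  calc #{w : G | w ^ (b * c) = 1 ∧ P w} = #((A.image Φ).filter P) := by
        rw [himage, filter_filter]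
    _ = #{it ∈ A | P (Φ it)} := by
        rw [filter_image, card_image_of_injOn (hΦ.mono (filter_subset _ _))]
    _ = ∑ i ∈ range b, #{t : H | t ^ c = 1 ∧ P (g ^ i * φ t)} := by
        simp only [A, card_filter, sum_product, sum_filter, ite_and, Φ]

end IsCyclic

theorem card_filter_eq_one_add_card_filter_units {M₀ : Type*} [GroupWithZero M₀] [Fintype M₀]
    [DecidableEq M₀] (Q : M₀ → Prop) [DecidablePred Q] (h0 : Q 0) :
    #{x : M₀ | Q x} = 1 + #{u : M₀ˣ | Q u} := by
  have hunits : #{u : M₀ˣ | Q u} = #{x : M₀ | x ≠ 0 ∧ Q x} := by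
    refine card_bij (fun u _ => (u : M₀)) (fun u hu => ?_) (fun u _ v _ => Units.ext)
      (fun x hx => ?_)
    · simp only [mem_filter, mem_univ, true_and] at hu ⊢
      exact ⟨u.ne_zero, hu⟩
    · simp only [mem_filter, mem_univ, true_and] at hx
      exact ⟨Units.mk0 x hx.1, by simpa using hx.2, rfl⟩
  have hsplit : ({x | Q x} : Finset M₀) = insert 0 ({x | x ≠ 0 ∧ Q x} : Finset M₀) := by
    ext x
    by_cases hx : x = 0 <;> simp [hx, h0]
  rw [hunits, hsplit, card_insert_of_notMem (by simp), add_comm]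

def artinSchreier (K : Type*) [CommRing K] (p : ℕ) [ExpChar K p] : K →+ K :=
  (frobenius K p).toAddMonoidHom - AddMonoidHom.id K

@[simp]
theorem artinSchreier_apply {K : Type*} [CommRing K] {p : ℕ} [ExpChar K p] (y : K) :
    artinSchreier K p y = y ^ p - y := rfl

section ArtinSchreier

variable (K : Type*) [Field K] (p : ℕ) [Fact p.Prime] [CharP K p]

theorem card_ker_artinSchreier : Nat.card (artinSchreier K p).ker = p :=
  .trans (Nat.card_congr <| Equiv.subtypeEquivRight fun y => by
    simp [Subfield.mem_bot_iff_pow_eq_self K p, sub_eq_zero]) (Subfield.card_bot K p)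

theorem index_range_artinSchreier [Finite K] : (artinSchreier K p).range.index = p := by
  rw [AddSubgroup.index_range, card_ker_artinSchreier]

theorem card_filter_artinSchreier_eq [Fintype K] [DecidableEq K] (s : K) :
    #{y : K | y ^ p - y = s} = if s ∈ (artinSchreier K p).range then p else 0 := by
  split_ifs with hs
  · calc #{y : K | y ^ p - y = s} = #{y : K | artinSchreier K p y = 0} :=
          AddMonoidHom.card_fiber_eq_of_mem_range _ hs ⟨0, map_zero _⟩
      _ = Nat.card (artinSchreier K p).ker := by
          rw [← Fintype.card_subtype, ← Nat.card_eq_fintype_card]; rfl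
      _ = p := card_ker_artinSchreier K p
  · exact card_eq_zero.2 <| filter_eq_empty_iff.2 fun y _ hy => hs ⟨y, hy⟩

end ArtinSchreier

section Count

variable (K : Type) [Field K] [Fintype K] [DecidableEq K] (p : ℕ) [Fact p.Prime] [CharP K p]

theorem ascount_eq_one_add_mul_card (j : ℕ) (α : K) :
    ascount p K j α = 1 + p * #{x : K | α * x ^ j ∈ (artinSchreier K p).range} := by
  rw [ascount, card_filter, Fintype.sum_prod_type]
  simp_rw [← card_filter, card_filter_artinSchreier_eq]
  rw [sum_ite, sum_const, sum_const_zero, smul_eq_mul, add_zero, mul_comm]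

theorem ascount_eq {j e : ℕ} (h : j * e = Fintype.card K - 1) (α : K) :
    ascount p K j α =
      1 + p * (1 + j * #{w : Kˣ | w ^ e = 1 ∧ α * w ∈ (artinSchreier K p).range}) := by
  have hj : j ≠ 0 := by
    rintro rfl
    have := Fintype.one_lt_card (α := K)
    omega
  rw [ascount_eq_one_add_mul_card, card_filter_eq_one_add_card_filter_units _ (by simp [hj]),
    ← IsCyclic.card_filter_pow (by rw [Nat.card_eq_fintype_card, Fintype.card_units, h])]
  simp

end Count

section Trace

variable {F E : Type*} [Field F] [Field E] [Finite E] [Algebra F E] (p : ℕ) [Fact p.Prime]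

theorem trace_pow_char [CharP E p] (y : E) :
    Algebra.trace F E (y ^ p) = Algebra.trace F E y ^ p := by
  apply (algebraMap F E).injective
  rw [RingHom.map_pow, FiniteField.algebraMap_trace_eq_sum_pow,
    FiniteField.algebraMap_trace_eq_sum_pow, sum_pow_char]
  exact sum_congr rfl fun i _ => pow_right_comm _ _ _

variable [CharP F p] [CharP E p]

theorem trace_artinSchreier (y : E) :
    Algebra.trace F E (artinSchreier E p y) = artinSchreier F p (Algebra.trace F E y) := by
  simp [trace_pow_char]

theorem mem_range_artinSchreier_iff_trace_mem (x : E) :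
    x ∈ (artinSchreier E p).range ↔ Algebra.trace F E x ∈ (artinSchreier F p).range := by
  have := Finite.of_injective _ (algebraMap F E).injective
  set S := (artinSchreier F p).range.comap (Algebra.trace F E).toAddMonoidHom
  have hle : (artinSchreier E p).range ≤ S := by
    rintro _ ⟨y, rfl⟩
    exact ⟨Algebra.trace F E y, (trace_artinSchreier p y).symm⟩
  have hindex : S.index = (artinSchreier E p).range.index := by
    rw [AddSubgroup.index_comap_of_surjective _ (Algebra.trace_surjective F E),
      index_range_artinSchreier, index_range_artinSchreier]
  have hge : S ≤ (artinSchreier E p).range := by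
    rw [← AddSubgroup.relIndex_eq_one]
    have := AddSubgroup.relIndex_mul_index hle
    rw [hindex] at this
    exact (Nat.mul_eq_right AddSubgroup.index_ne_zero_of_finite).1 this
  exact ⟨fun hx => hle hx, fun hx => hge hx⟩

end Trace

theorem FiniteField.finrank_zmod_eq_of_card_eq_pow (p : ℕ) [Fact p.Prime] {K : Type*} [Field K]
    [Fintype K] [Algebra (ZMod p) K] {r : ℕ} (hK : Fintype.card K = p ^ r) :
    Module.finrank (ZMod p) K = r :=
  Nat.pow_right_injective (Fact.out : p.Prime).two_le ((pow_finrank_eq_card p K).trans hK)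

theorem FiniteField.nonempty_ringHom_of_card_eq_pow (p : ℕ) [Fact p.Prime] {F E : Type*}
    [Field F] [Fintype F] [Field E] [Fintype E] {a m : ℕ} (hF : Fintype.card F = p ^ a)
    (hE : Fintype.card E = p ^ m) (hdvd : a ∣ m) : Nonempty (F →+* E) := by
  have := charP_of_card_eq_prime_pow hF
  have := charP_of_card_eq_prime_pow hE
  let := ZMod.algebra F p
  let := ZMod.algebra E p
  obtain ⟨f⟩ := nonempty_algHom_of_finrank_dvd (F := ZMod p) (K := F) (L := E)
    (by rwa [finrank_zmod_eq_of_card_eq_pow p hF, finrank_zmod_eq_of_card_eq_pow p hE])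
  exact ⟨f.toRingHom⟩

theorem psi_succ (b q : ℕ) : psi (b + 1) q = q * psi b q + 1 := geom_sum_succ

theorem psi_mul_sub_one_add_one {q : ℕ} (hq : 1 ≤ q) (b : ℕ) :
    psi b q * (q - 1) + 1 = q ^ b := by
  simpa [psi, Nat.sub_add_cancel hq] using geom_sum_mul_add (q - 1) b

theorem pow_modEq_one_mod_psi {q : ℕ} (hq : 1 ≤ q) (b : ℕ) : q ^ b ≡ 1 [MOD psi b q] := by
  rw [← psi_mul_sub_one_add_one hq b]
  simp

theorem mul_eq_mul_psi {q b c k u : ℕ} (hc : 0 < c) (hq : 1 ≤ q) (hk : b * c * k = q ^ b - 1)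
    (hu : u * c = q - 1) : b * k = u * psi b q := by
  apply Nat.eq_of_mul_eq_mul_left hc
  calc c * (b * k) = b * c * k := by ring
    _ = psi b q * (q - 1) := by rw [hk, ← psi_mul_sub_one_add_one hq b, Nat.add_sub_cancel]
    _ = c * (u * psi b q) := by rw [← hu]; ring

theorem modEq_of_pointCounts {p q b k u : ℕ} (z : ℕ → ℕ) (hq : 1 ≤ q) (hb : 0 < b)
    (hbk : b * k = u * psi b q) :
    b * (1 + p * (1 + k * ∑ i ∈ range b, z i)) ≡
        psi b q * ∑ i ∈ range b, (1 + p * (1 + u * z i)) [MOD q] ∧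
      b * (1 + p * (1 + k * ∑ i ∈ range b, z i)) ≡
        q ^ (b - 1) * ∑ i ∈ range b, (1 + p * (1 + u * z i)) [MOD psi (b - 1) q] := by
  set X := b * (1 + p)
  set Y := p * u * ∑ i ∈ range b, z i
  have hlhs : b * (1 + p * (1 + k * ∑ i ∈ range b, z i)) = X + Y * psi b q := by
    calc _ = X + p * (∑ i ∈ range b, z i) * (b * k) := by ring
      _ = X + Y * psi b q := by rw [hbk]; ring
  have hrhs : ∑ i ∈ range b, (1 + p * (1 + u * z i)) = X + Y := by
    simp only [sum_add_distrib, ← mul_sum, sum_const, card_range, smul_eq_mul, X, Y]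
    ring
  have key : ∀ {m r : ℕ}, psi b q ≡ 1 [MOD m] → r ≡ 1 [MOD m] →
      X + Y * psi b q ≡ r * (X + Y) [MOD m] := by
    intro m r hs hr
    calc X + Y * psi b q ≡ X + Y * 1 [MOD m] := (hs.mul_left Y).add_left X
      _ = 1 * (X + Y) := by ring
      _ ≡ r * (X + Y) [MOD m] := (hr.mul_right _).symm
  obtain ⟨b, rfl⟩ := Nat.exists_eq_add_of_lt hb
  rw [hlhs, hrhs]
  exact ⟨key (by simp [psi_succ]) (by simp [psi_succ]),
    key (by simp [psi_succ]) (pow_modEq_one_mod_psi hq _)⟩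

theorem card_filter_pow_eq_one_artinSchreier_eq_sum {F E : Type*} [Field F] [Fintype F]
    [DecidableEq F] [Field E] [Fintype E] [DecidableEq E] [Algebra F E] (p : ℕ) [Fact p.Prime]
    [CharP F p] [CharP E p] {b c : ℕ} (hc : c ∣ Fintype.card F - 1)
    (hbc : b * c ∣ Fintype.card E - 1) {h : Eˣ} (hh : orderOf h = b * c) (β : E) :
    #{w : Eˣ | w ^ (b * c) = 1 ∧ β * w ∈ (artinSchreier E p).range} =
      ∑ i ∈ range b, #{t : Fˣ | t ^ c = 1 ∧
        Algebra.trace F E (β * h ^ i) * t ∈ (artinSchreier F p).range} := by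
  have hι : Function.Injective (Units.map (algebraMap F E : F →* E)) := fun s t hst =>
    Units.ext ((algebraMap F E).injective (congrArg Units.val hst))
  rw [IsCyclic.card_filter_pow_eq_one_eq_sum _ hι
    (by simpa [Nat.card_eq_fintype_card, Fintype.card_units] using hc)
    (by simpa [Nat.card_eq_fintype_card, Fintype.card_units] using hbc) hh]
  refine sum_congr rfl fun i _ => ?_
  congr 1
  ext t
  have hsmul :
      β * ↑(h ^ i * Units.map (algebraMap F E : F →* E) t) = (t : F) • (β * ↑h ^ i) := by
    simp [Algebra.smul_def]
    ring
  simp only [mem_filter, mem_univ, true_and]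
  rw [mem_range_artinSchreier_iff_trace_mem (F := F), hsmul, map_smul, smul_eq_mul, mul_comm]

theorem stmt14_general (p k m n a b c u : ℕ) (hp : p.Prime)
    (hcpos : 0 < c)
    (hn : n * k = p ^ m - 1)
    (hm : m = a * b) (hnbc : n = b * c) (hb : 1 < b)
    (huc : u * c = p ^ a - 1)
    (F E : Type) [Field F] [Fintype F] [DecidableEq F]
    [Field E] [Fintype E] [DecidableEq E]
    (hFcard : Fintype.card F = p ^ a) (hEcard : Fintype.card E = p ^ m) :
    ∀ β : E, ∃ α : Fin b → F,
      Nat.ModEq (p ^ a) (b * ascount p E k β)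
        (psi b (p ^ a) * ∑ i : Fin b, ascount p F u (α i)) ∧
      Nat.ModEq (psi (b - 1) (p ^ a)) (b * ascount p E k β)
        (p ^ (a * (b - 1)) * ∑ i : Fin b, ascount p F u (α i)) := by
  intro β
  have := Fact.mk hp
  have := charP_of_card_eq_prime_pow hFcard
  have := charP_of_card_eq_prime_pow hEcard
  obtain ⟨ι⟩ :=
    FiniteField.nonempty_ringHom_of_card_eq_pow p hFcard hEcard (hm ▸ dvd_mul_right a b)
  let := ι.toAlgebra
  obtain ⟨g, hg⟩ := IsCyclic.exists_ofOrder_eq_natCard (α := Eˣ)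
  have hn_dvd : n ∣ orderOf g := by
    rw [hg, Nat.card_eq_fintype_card, Fintype.card_units, hEcard, ← hn]
    exact dvd_mul_right n k
  set h := g ^ (orderOf g / n)
  have hh : orderOf h = b * c := hnbc ▸ orderOf_pow_orderOf_div (orderOf_pos g).ne' hn_dvd
  refine ⟨fun i => Algebra.trace F E (β * h ^ (i : ℕ)), ?_⟩
  have hq : 1 ≤ p ^ a := Nat.one_le_pow _ _ hp.pos
  have hbk : b * k = u * psi b (p ^ a) :=
    mul_eq_mul_psi hcpos hq (by rw [← hnbc, hn, hm, pow_mul]) huc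
  have hu : u * c = Fintype.card F - 1 := by rw [hFcard, huc]
  rw [ascount_eq E p (j := k) (e := n) (by rw [hEcard, ← hn, mul_comm]) β, hnbc,
    card_filter_pow_eq_one_artinSchreier_eq_sum p (Dvd.intro_left u hu)
      (Dvd.intro k (by rw [hEcard, ← hn, hnbc])) hh β,
    Fin.sum_univ_eq_sum_range (fun i => ascount p F u (Algebra.trace F E (β * h ^ i))) b]
  simp only [ascount_eq F p hu]
  rw [pow_mul]
  exact modEq_of_pointCounts (fun i => #{t : Fˣ | t ^ c = 1 ∧
    Algebra.trace F E (β * h ^ i) * t ∈ (artinSchreier F p).range}) hq (by omega) hbk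

theorem stmt14 (p k m n a b c u : ℕ) (hp : p.Prime)
    (hk : 0 < k) (ha : 0 < a) (hcpos : 0 < c) (hupos : 0 < u)
    (hkdvd : k ∣ p ^ m - 1) (hn : n * k = p ^ m - 1)
    (hm : m = a * b) (hnbc : n = b * c) (hb : 1 < b)
    (huc : u * c = p ^ a - 1)
    (hcprim : IsPrimitiveDivisor c p a) (hnprim : IsPrimitiveDivisor n p m)
    (hpc : (p - 1) ∣ c)
    (F E : Type) [Field F] [Fintype F] [DecidableEq F]
    [Field E] [Fintype E] [DecidableEq E]
    (hFcard : Fintype.card F = p ^ a) (hEcard : Fintype.card E = p ^ m) :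
    ∀ β : E, ∃ α : Fin b → F,
      Nat.ModEq (p ^ a) (b * ascount p E k β)
        (psi b (p ^ a) * ∑ i : Fin b, ascount p F u (α i)) ∧
      Nat.ModEq (psi (b - 1) (p ^ a)) (b * ascount p E k β)
        (p ^ (a * (b - 1)) * ∑ i : Fin b, ascount p F u (α i)) :=
  stmt14_general p k m n a b c u hp hcpos hn hm hnbc hb huc F E hFcard hEcard
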